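/- arXiv:2604.22495 — 2 statements merged into one kernel-verified Lean document; each statement's English description precedes it below -/
import Mathlib

section
/- Let A ∈ ℝ^{m×n}, b ∈ ℝ^m, c ∈ ℝ^n. Suppose z = (y, x, t) ∈ ℝ^m × ℝ^n × ℝ is a probability vector satisfying Ax − tb ≥ 0, −Aᵀy + tc ≥ 0, and bᵀy − cᵀx ≥ 0, and suppose t > 0 and bᵀy − cᵀx = 0. Then (1/t)x is an optimal solution of the primal LP min{cᵀx : Ax ≥ b, x ≥ 0} and (1/t)y is an optimal solution of the dual LP max{bᵀy : Aᵀy ≤ c, y ≥ 0}. -/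
open Matrix

/-- Weak duality for the LP pair. -/
lemma dantzig_weak_duality {m n : ℕ} (A : Matrix (Fin m) (Fin n) ℝ)
    (b : Fin m → ℝ) (c : Fin n → ℝ) (x' : Fin n → ℝ) (u : Fin m → ℝ)
    (hx' : ∀ j, 0 ≤ x' j) (hAx' : ∀ i, b i ≤ A.mulVec x' i)
    (hu : ∀ i, 0 ≤ u i) (hAu : ∀ j, A.transpose.mulVec u j ≤ c j) :
    b ⬝ᵥ u ≤ c ⬝ᵥ x' := by
  have h1 : b ⬝ᵥ u ≤ (A.mulVec x') ⬝ᵥ u := by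
    apply Finset.sum_le_sum
    intro i _
    exact mul_le_mul_of_nonneg_right (hAx' i) (hu i)
  have h2 : (A.mulVec x') ⬝ᵥ u = (A.transpose.mulVec u) ⬝ᵥ x' := by
    rw [dotProduct_comm, Matrix.dotProduct_mulVec, Matrix.mulVec_transpose]
  have h3 : (A.transpose.mulVec u) ⬝ᵥ x' ≤ c ⬝ᵥ x' := by
    apply Finset.sum_le_sum
    intro j _
    exact mul_le_mul_of_nonneg_right (hAu j) (hx' j)
  linarith

/-- The positive-`t` case in Dantzig's reduction of an LP to a zero-sum game:
from an optimal strategy `(y, x, t)` with `t > 0` and `bᵀy = cᵀx` one recovers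
optimal solutions `(1/t)x` of the primal LP and `(1/t)y` of the dual LP. -/
theorem dantzig_reduction_positive_t {m n : ℕ} (A : Matrix (Fin m) (Fin n) ℝ)
    (b : Fin m → ℝ) (c : Fin n → ℝ)
    (y : Fin m → ℝ) (x : Fin n → ℝ) (t : ℝ)
    (hy : ∀ i, 0 ≤ y i) (hx : ∀ j, 0 ≤ x j) (ht0 : 0 ≤ t)
    (hprob : (∑ i, y i) + (∑ j, x j) + t = 1)
    (h1 : ∀ i, 0 ≤ A.mulVec x i - t * b i)
    (h2 : ∀ j, 0 ≤ -(A.transpose.mulVec y j) + t * c j)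
    (h3 : 0 ≤ b ⬝ᵥ y - c ⬝ᵥ x)
    (ht : 0 < t) (heq : b ⬝ᵥ y - c ⬝ᵥ x = 0) :
    ((∀ j, 0 ≤ (t⁻¹ • x) j) ∧ (∀ i, b i ≤ A.mulVec (t⁻¹ • x) i) ∧
      (∀ x' : Fin n → ℝ, (∀ j, 0 ≤ x' j) → (∀ i, b i ≤ A.mulVec x' i) →
        c ⬝ᵥ (t⁻¹ • x) ≤ c ⬝ᵥ x')) ∧
    ((∀ i, 0 ≤ (t⁻¹ • y) i) ∧ (∀ j, A.transpose.mulVec (t⁻¹ • y) j ≤ c j) ∧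
      (∀ y' : Fin m → ℝ, (∀ i, 0 ≤ y' i) → (∀ j, A.transpose.mulVec y' j ≤ c j) →
        b ⬝ᵥ y' ≤ b ⬝ᵥ (t⁻¹ • y))) := by
  have hti : 0 < t⁻¹ := inv_pos.mpr ht
  have hxfeas0 : ∀ j, 0 ≤ (t⁻¹ • x) j := fun j => mul_nonneg hti.le (hx j)
  have hxfeas : ∀ i, b i ≤ A.mulVec (t⁻¹ • x) i := by
    intro i
    rw [Matrix.mulVec_smul]
    have := h1 i
    have : t * b i ≤ A.mulVec x i := by linarith
    calc b i = t⁻¹ * (t * b i) := by field_simp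
    _ ≤ t⁻¹ * A.mulVec x i := by
        exact mul_le_mul_of_nonneg_left this hti.le
    _ = (t⁻¹ • A.mulVec x) i := rfl
  have hyfeas0 : ∀ i, 0 ≤ (t⁻¹ • y) i := fun i => mul_nonneg hti.le (hy i)
  have hyfeas : ∀ j, A.transpose.mulVec (t⁻¹ • y) j ≤ c j := by
    intro j
    rw [Matrix.mulVec_smul]
    have := h2 j
    have h' : A.transpose.mulVec y j ≤ t * c j := by linarith
    calc (t⁻¹ • A.transpose.mulVec y) j = t⁻¹ * A.transpose.mulVec y j := rfl
    _ ≤ t⁻¹ * (t * c j) := mul_le_mul_of_nonneg_left h' hti.le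
    _ = c j := by field_simp
  have hval : c ⬝ᵥ (t⁻¹ • x) = b ⬝ᵥ (t⁻¹ • y) := by
    rw [dotProduct_smul, dotProduct_smul]
    have : b ⬝ᵥ y = c ⬝ᵥ x := by linarith
    rw [this]
  refine ⟨⟨hxfeas0, hxfeas, ?_⟩, ⟨hyfeas0, hyfeas, ?_⟩⟩
  · intro x' hx' hAx'
    have := dantzig_weak_duality A b c x' (t⁻¹ • y) hx' hAx' hyfeas0 hyfeas
    linarith [hval]
  · intro y' hy' hAy'
    have := dantzig_weak_duality A b c (t⁻¹ • x) y' hxfeas0 hxfeas hy' hAy'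
    linarith [hval]
end

section
/- For the Khachiyan-type SDP: fix τ, n ∈ ℕ, let B = 2^τ, and consider variables x₀,…,x_n ∈ ℝ with x₀ = 1/2 and constraints [[x_i, x_{i−1}],[x_{i−1}, B]] ⪰ 0 for i = 1,…,n. Then for any feasible point, x_n ≥ (1/2)^{2^n} / B^{2^n − 1} = 2^{−(τ+1)2^n + τ}, and this bound is attained by the point defined recursively by x_i = x_{i−1}²/B. -/
/-! A feasible point satisfies `xᵢ ≥ xᵢ₋₁² / B` (Schur complement of the `2 × 2` constraint), and
squaring is monotone on nonnegative reals, so by induction every feasible `xᵢ` dominates the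
sequence obtained by iterating `y ↦ y² / B` from `1/2`; that sequence is feasible and equals
`B · (1/(2B))^(2ⁱ) = 2^(-(τ+1)2ⁱ + τ)`. -/

namespace Matrix

variable {R : Type*} [Field R] [LinearOrder R] [IsStrictOrderedRing R] [StarRing R] [TrivialStar R]

theorem posSemidef_two_iff_sq_div_le {a b c : R} (hb : 0 < b) :
    (!![a, c; c, b] : Matrix (Fin 2) (Fin 2) R).PosSemidef ↔ c ^ 2 / b ≤ a := by
  rw [posSemidef_iff_dotProduct_mulVec, div_le_iff₀ hb]
  constructor
  · rintro ⟨-, hquad⟩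
    have h := hquad ![b, -c]
    simp [dotProduct, mulVec, Fin.sum_univ_two] at h
    nlinarith
  · intro h
    refine ⟨?_, fun y => ?_⟩
    · ext i j
      fin_cases i <;> fin_cases j <;> simp [conjTranspose_apply]
    · have hsquare : b * (star y ⬝ᵥ (!![a, c; c, b] *ᵥ y)) =
          (b * y 1 + c * y 0) ^ 2 + (a * b - c ^ 2) * y 0 ^ 2 := by
        simp [dotProduct, mulVec, Fin.sum_univ_two]
        ring
      nlinarith [sq_nonneg (b * y 1 + c * y 0), sq_nonneg (y 0)]

end Matrix

/-- The closed form of the orbit of `x₀` under `y ↦ y² / B`. -/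
noncomputable def squaringSeq (B x₀ : ℝ) (i : ℕ) : ℝ :=
  B * (x₀ / B) ^ 2 ^ i

namespace squaringSeq

variable {B x₀ : ℝ}

theorem zero (hB : B ≠ 0) : squaringSeq B x₀ 0 = x₀ := by
  simp [squaringSeq, mul_div_cancel₀ _ hB]

theorem succ (B x₀ : ℝ) (i : ℕ) : squaringSeq B x₀ (i + 1) = squaringSeq B x₀ i ^ 2 / B := by
  rcases eq_or_ne B 0 with rfl | hB
  · simp [squaringSeq]
  · simp only [squaringSeq]
    field_simp
    ring

theorem nonneg (hB : 0 ≤ B) (hx₀ : 0 ≤ x₀) (i : ℕ) : 0 ≤ squaringSeq B x₀ i := by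
  unfold squaringSeq
  positivity

theorem le_of_sq_div_le {x : ℕ → ℝ} {n : ℕ} (hB : 0 < B) (hx₀ : 0 ≤ x₀) (h0 : x₀ ≤ x 0)
    (hstep : ∀ i < n, x i ^ 2 / B ≤ x (i + 1)) : squaringSeq B x₀ n ≤ x n := by
  induction n with
  | zero => rwa [zero hB.ne']
  | succ k ih =>
    have hk : squaringSeq B x₀ k ≤ x k := ih fun i hi => hstep i (by omega)
    calc squaringSeq B x₀ (k + 1) = squaringSeq B x₀ k ^ 2 / B := succ B x₀ k
      _ ≤ x k ^ 2 / B := by gcongr; exact nonneg hB.le hx₀ k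
      _ ≤ x (k + 1) := hstep k (by omega)

theorem two_pow_half (τ i : ℕ) :
    squaringSeq (2 ^ τ) (1 / 2) i = (2 : ℝ) ^ (-((τ : ℤ) + 1) * 2 ^ i + τ) := by
  have h2 : (2 : ℝ) ≠ 0 := two_ne_zero
  have hbase : (1 / 2 / 2 ^ τ : ℝ) = 2 ^ (-((τ : ℤ) + 1)) := by
    rw [zpow_neg, zpow_add_one₀ h2, zpow_natCast]
    ring
  rw [squaringSeq, hbase, ← zpow_natCast _ (2 ^ i), ← zpow_mul, ← zpow_natCast (2 : ℝ) τ,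
    ← zpow_add₀ h2]
  push_cast
  ring_nf

end squaringSeq

/-- Khachiyan-type SDP: with `B = 2^τ`, `x₀ = 1/2` and constraints
`[[xᵢ, xᵢ₋₁],[xᵢ₋₁, B]] ⪰ 0` for `i = 1,…,n`, every feasible point satisfies
`xₙ ≥ 2^(-(τ+1)·2ⁿ + τ)`, and this bound is attained by the point defined
recursively by `xᵢ = xᵢ₋₁² / B`. -/
theorem khachiyan_sdp (τ n : ℕ) :
    (∀ x : ℕ → ℝ, x 0 = 1/2 →
      (∀ i, 1 ≤ i → i ≤ n →
        (!![x i, x (i-1); x (i-1), ((2:ℝ)^τ)] : Matrix (Fin 2) (Fin 2) ℝ).PosSemidef) →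
      (2:ℝ) ^ (-((τ:ℤ)+1) * 2^n + τ) ≤ x n) ∧
    (∃ v : ℕ → ℝ, v 0 = 1/2 ∧
      (∀ i, v (i+1) = (v i)^2 / (2:ℝ)^τ) ∧
      (∀ i, 1 ≤ i → i ≤ n →
        (!![v i, v (i-1); v (i-1), ((2:ℝ)^τ)] : Matrix (Fin 2) (Fin 2) ℝ).PosSemidef) ∧
      v n = (2:ℝ) ^ (-((τ:ℤ)+1) * 2^n + τ)) := by
  have hB : (0 : ℝ) < 2 ^ τ := by positivity
  constructor
  · intro x hx0 hfeas
    rw [← squaringSeq.two_pow_half]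
    refine squaringSeq.le_of_sq_div_le hB (by norm_num) hx0.ge fun i hi => ?_
    simpa [Matrix.posSemidef_two_iff_sq_div_le hB] using hfeas (i + 1) (by omega) hi
  · refine ⟨squaringSeq (2 ^ τ) (1 / 2), squaringSeq.zero hB.ne', squaringSeq.succ _ _,
      fun i hi _ => ?_, squaringSeq.two_pow_half τ n⟩
    obtain ⟨k, rfl⟩ := Nat.exists_eq_add_of_le' hi
    simp [Matrix.posSemidef_two_iff_sq_div_le hB, squaringSeq.succ]
end
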